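/- Let M, U, V : ℝ² → ℝ be smooth functions of (θ, v) satisfying the plane-polarized colliding plane wave evolution equations U_{θv} = U_θ U_v, V_{θv} = ½(U_θ V_v + U_v V_θ), and M_{θv} = ½(−U_θ U_v + V_θ V_v). Define the θ-constraint function H = U_{θθ} − ½(U_θ² + V_θ²) + U_θ M_θ. Then H satisfies the propagation equation H_v = U_v H; in particular, if H vanishes on a line v = v₀, then H vanishes identically, so the θ-constraint is preserved by the evolution equations. -/

import Mathlib

/-!
Differentiating `H` in `v` and commuting the mixed partials, the evolution equation for `U`
gives `(U_θθ)_v = U_θθ U_v + U_θ² U_v`; substituting the three evolution equations into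
`H_v` then leaves exactly `U_v H`. Along each line `θ = const` this is the linear ODE
`H_v = U_v H`, so `H e^{-U}` is constant in `v`, and `H` vanishes identically once it
vanishes at one value of `v`.
-/

open Real

noncomputable def pd1 (F : ℝ → ℝ → ℝ) : ℝ → ℝ → ℝ := fun θ v => deriv (fun t => F t v) θ
noncomputable def pd2 (F : ℝ → ℝ → ℝ) : ℝ → ℝ → ℝ := fun θ v => deriv (fun s => F θ s) v

open Function

section SliceDerivative

variable {E : Type*} [NormedAddCommGroup E] [NormedSpace ℝ E]
  {G : ℝ × ℝ → E} {G' : ℝ × ℝ →L[ℝ] E} {θ v : ℝ}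

theorem HasFDerivAt.hasDerivAt_comp_prodMk_left (h : HasFDerivAt G G' (θ, v)) :
    HasDerivAt (fun t => G (t, v)) (G' (1, 0)) θ :=
  h.comp_hasDerivAt θ ((hasDerivAt_id θ).prodMk (hasDerivAt_const θ v))

theorem HasFDerivAt.hasDerivAt_comp_prodMk_right (h : HasFDerivAt G G' (θ, v)) :
    HasDerivAt (fun s => G (θ, s)) (G' (0, 1)) v :=
  h.comp_hasDerivAt v ((hasDerivAt_const v θ).prodMk (hasDerivAt_id v))

end SliceDerivative

section PartialDerivatives

variable {F : ℝ → ℝ → ℝ} {θ v : ℝ}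

theorem pd1_eq_fderiv (hF : DifferentiableAt ℝ (uncurry F) (θ, v)) :
    pd1 F θ v = fderiv ℝ (uncurry F) (θ, v) (1, 0) :=
  hF.hasFDerivAt.hasDerivAt_comp_prodMk_left.deriv

theorem pd2_eq_fderiv (hF : DifferentiableAt ℝ (uncurry F) (θ, v)) :
    pd2 F θ v = fderiv ℝ (uncurry F) (θ, v) (0, 1) :=
  hF.hasFDerivAt.hasDerivAt_comp_prodMk_right.deriv

theorem hasDerivAt_pd1 (hF : DifferentiableAt ℝ (uncurry F) (θ, v)) :
    HasDerivAt (fun t => F t v) (pd1 F θ v) θ := by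
  rw [pd1_eq_fderiv hF]
  exact hF.hasFDerivAt.hasDerivAt_comp_prodMk_left

theorem hasDerivAt_pd2 (hF : DifferentiableAt ℝ (uncurry F) (θ, v)) :
    HasDerivAt (fun s => F θ s) (pd2 F θ v) v := by
  rw [pd2_eq_fderiv hF]
  exact hF.hasFDerivAt.hasDerivAt_comp_prodMk_right

theorem contDiff_pd1 {m n : WithTop ℕ∞} (hF : ContDiff ℝ n (uncurry F)) (hmn : m + 1 ≤ n) :
    ContDiff ℝ m (uncurry (pd1 F)) := by
  have hF1 : Differentiable ℝ (uncurry F) :=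
    (hF.of_le (le_trans le_add_self hmn)).differentiable one_ne_zero
  convert (hF.fderiv_right hmn).clm_apply contDiff_const with p
  exact pd1_eq_fderiv (hF1 p)

theorem contDiff_pd2 {m n : WithTop ℕ∞} (hF : ContDiff ℝ n (uncurry F)) (hmn : m + 1 ≤ n) :
    ContDiff ℝ m (uncurry (pd2 F)) := by
  have hF1 : Differentiable ℝ (uncurry F) :=
    (hF.of_le (le_trans le_add_self hmn)).differentiable one_ne_zero
  convert (hF.fderiv_right hmn).clm_apply contDiff_const with p
  exact pd2_eq_fderiv (hF1 p)

theorem differentiable_pd1 (hF : ContDiff ℝ 2 (uncurry F)) : Differentiable ℝ (uncurry (pd1 F)) :=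
  (contDiff_pd1 hF (m := 1) (by norm_num)).differentiable one_ne_zero

theorem pd2_pd1_comm (hF : ContDiff ℝ 2 (uncurry F)) (θ v : ℝ) :
    pd2 (pd1 F) θ v = pd1 (pd2 F) θ v := by
  set f := uncurry F
  have hf : Differentiable ℝ f := hF.differentiable two_ne_zero
  have hf' : DifferentiableAt ℝ (fderiv ℝ f) (θ, v) :=
    (hF.fderiv_right (m := 1) (by norm_num)).differentiable one_ne_zero _
  have h1 : pd1 F = fun θ v => fderiv ℝ f (θ, v) (1, 0) := funext₂ fun θ v => pd1_eq_fderiv (hf _)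
  have h2 : pd2 F = fun θ v => fderiv ℝ f (θ, v) (0, 1) := funext₂ fun θ v => pd2_eq_fderiv (hf _)
  have d1 : HasDerivAt (fun s => fderiv ℝ f (θ, s) (1, 0))
      (fderiv ℝ (fderiv ℝ f) (θ, v) (0, 1) (1, 0)) v := by
    simpa using hf'.hasFDerivAt.hasDerivAt_comp_prodMk_right.clm_apply (hasDerivAt_const v (1, 0))
  have d2 : HasDerivAt (fun t => fderiv ℝ f (t, v) (0, 1))
      (fderiv ℝ (fderiv ℝ f) (θ, v) (1, 0) (0, 1)) θ := by
    simpa using hf'.hasFDerivAt.hasDerivAt_comp_prodMk_left.clm_apply (hasDerivAt_const θ (0, 1))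
  rw [h1, h2]
  exact d1.deriv.trans
    (((hF.contDiffAt.isSymmSndFDerivAt (by simp)).eq _ _).trans d2.deriv.symm)

end PartialDerivatives

theorem eq_zero_of_hasDerivAt_eq_mul {h u u' : ℝ → ℝ} (hu : ∀ s, HasDerivAt u (u' s) s)
    (hh : ∀ s, HasDerivAt h (u' s * h s) s) {s₀ : ℝ} (h₀ : h s₀ = 0) (s : ℝ) : h s = 0 := by
  have hconst : ∀ s, HasDerivAt (fun s => h s * exp (-u s)) 0 s := fun s => by
    have d : HasDerivAt (fun s => h s * exp (-u s))
        (u' s * h s * exp (-u s) + h s * (exp (-u s) * -u' s)) s := (hh s).mul (hu s).neg.exp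
    convert d using 1
    ring
  have := is_const_of_deriv_eq_zero (fun s => (hconst s).differentiableAt)
    (fun s => (hconst s).deriv) s s₀
  simpa [h₀, exp_ne_zero] using this

noncomputable def thetaConstraint (U V M : ℝ → ℝ → ℝ) : ℝ → ℝ → ℝ := fun θ v =>
  pd1 (pd1 U) θ v - (1/2) * ((pd1 U θ v)^2 + (pd1 V θ v)^2) + pd1 U θ v * pd1 M θ v

section CollidingPlaneWaves

variable {U V M : ℝ → ℝ → ℝ}

theorem pd2_pd1_pd1_eq (hU : ContDiff ℝ 3 (uncurry U))
    (e1 : ∀ θ v, pd2 (pd1 U) θ v = pd1 U θ v * pd2 U θ v) (θ v : ℝ) :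
    pd2 (pd1 (pd1 U)) θ v = pd1 (pd1 U) θ v * pd2 U θ v + pd1 U θ v ^ 2 * pd2 U θ v := by
  have hUθ : ContDiff ℝ 2 (uncurry (pd1 U)) := contDiff_pd1 hU (by norm_num)
  have hUv : ContDiff ℝ 2 (uncurry (pd2 U)) := contDiff_pd2 hU (by norm_num)
  have hprod : HasDerivAt (fun t => pd1 U t v * pd2 U t v)
      (pd1 (pd1 U) θ v * pd2 U θ v + pd1 U θ v * pd1 (pd2 U) θ v) θ :=
    (hasDerivAt_pd1 (hUθ.differentiable two_ne_zero _)).mul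
      (hasDerivAt_pd1 (hUv.differentiable two_ne_zero _))
  calc pd2 (pd1 (pd1 U)) θ v = pd1 (pd2 (pd1 U)) θ v := pd2_pd1_comm hUθ θ v
    _ = pd1 (pd1 U) θ v * pd2 U θ v + pd1 U θ v * pd1 (pd2 U) θ v := by
      show deriv (fun t => pd2 (pd1 U) t v) θ = _
      simp only [e1]
      exact hprod.deriv
    _ = _ := by
      rw [← pd2_pd1_comm (hU.of_le (by norm_num)), e1]
      ring

theorem hasDerivAt_thetaConstraint (hU : ContDiff ℝ 3 (uncurry U))
    (hV : ContDiff ℝ 2 (uncurry V)) (hM : ContDiff ℝ 2 (uncurry M))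
    (e1 : ∀ θ v, pd2 (pd1 U) θ v = pd1 U θ v * pd2 U θ v)
    (e2 : ∀ θ v, pd2 (pd1 V) θ v
        = (1/2) * (pd1 U θ v * pd2 V θ v + pd2 U θ v * pd1 V θ v))
    (e3 : ∀ θ v, pd2 (pd1 M) θ v
        = (1/2) * (-(pd1 U θ v * pd2 U θ v) + pd1 V θ v * pd2 V θ v)) (θ v : ℝ) :
    HasDerivAt (fun s => thetaConstraint U V M θ s) (pd2 U θ v * thetaConstraint U V M θ v) v := by
  have dUθθ := hasDerivAt_pd2 (differentiable_pd1 (contDiff_pd1 hU (m := 2) (by norm_num)) (θ, v))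
  have dUθ := hasDerivAt_pd2 (differentiable_pd1 (hU.of_le (by norm_num)) (θ, v))
  have dVθ := hasDerivAt_pd2 (differentiable_pd1 hV (θ, v))
  have dMθ := hasDerivAt_pd2 (differentiable_pd1 hM (θ, v))
  refine ((dUθθ.sub (((dUθ.pow 2).add (dVθ.pow 2)).const_mul (1/2))).add
    (dUθ.mul dMθ)).congr_deriv ?_
  rw [pd2_pd1_pd1_eq hU e1, e1, e2, e3, thetaConstraint]
  ring

end CollidingPlaneWaves

/-- For smooth solutions of the plane-polarized colliding plane wave evolution equations,
the `θ`-constraint function `H = U_{θθ} − ½(U_θ² + V_θ²) + U_θ M_θ` satisfies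
`H_v = U_v H`; in particular, if `H` vanishes on a line `v = v₀` then `H ≡ 0`:
the `θ`-constraint is preserved by the evolution. -/
theorem theta_constraint_preserved
    (M U V : ℝ → ℝ → ℝ)
    (hM : ContDiff ℝ (⊤ : ℕ∞) (fun p : ℝ × ℝ => M p.1 p.2))
    (hU : ContDiff ℝ (⊤ : ℕ∞) (fun p : ℝ × ℝ => U p.1 p.2))
    (hV : ContDiff ℝ (⊤ : ℕ∞) (fun p : ℝ × ℝ => V p.1 p.2))
    (e1 : ∀ θ v, pd2 (pd1 U) θ v = pd1 U θ v * pd2 U θ v)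
    (e2 : ∀ θ v, pd2 (pd1 V) θ v
        = (1/2) * (pd1 U θ v * pd2 V θ v + pd2 U θ v * pd1 V θ v))
    (e3 : ∀ θ v, pd2 (pd1 M) θ v
        = (1/2) * (-(pd1 U θ v * pd2 U θ v) + pd1 V θ v * pd2 V θ v))
    (H : ℝ → ℝ → ℝ)
    (hH : ∀ θ v, H θ v = pd1 (pd1 U) θ v
        - (1/2) * ((pd1 U θ v)^2 + (pd1 V θ v)^2) + pd1 U θ v * pd1 M θ v) :
    (∀ θ v, pd2 H θ v = pd2 U θ v * H θ v)
    ∧ (∀ v₀, (∀ θ, H θ v₀ = 0) → ∀ θ v, H θ v = 0) := by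
  obtain rfl : H = thetaConstraint U V M := funext₂ hH
  have hH_v := hasDerivAt_thetaConstraint (contDiff_infty.1 hU 3)
    (contDiff_infty.1 hV 2) (contDiff_infty.1 hM 2) e1 e2 e3
  refine ⟨fun θ v => (hH_v θ v).deriv, fun v₀ h₀ θ => ?_⟩
  exact eq_zero_of_hasDerivAt_eq_mul (fun s => hasDerivAt_pd2 (hU.differentiable (by simp) _))
    (hH_v θ) (h₀ θ)
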